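/- arXiv:math/9804102 — 4 statements merged into one kernel-verified Lean document; each statement's English description precedes it below -/
import Mathlib

section
/- (Bohr's theorem, positive part.) Let f(z) = Σ_{k=0}^∞ c_k z^k be a power series with complex coefficients that converges for every z in the open unit disk {z ∈ ℂ : |z| < 1}, and suppose |f(z)| < 1 for all z in the unit disk. Then Σ_{k=0}^∞ |c_k z^k| < 1 for every z with |z| < 1/3. -/
/-!
By Schwarz–Pick, a holomorphic self-map `f` of the unit disk satisfies
`|f'(0)| ≤ 1 - |f(0)|²`, i.e. `|c₁| ≤ 1 - |c₀|²`. Averaging `f` over the rotations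
`z ↦ ζʲ z` by the `k`-th roots of unity leaves `∑ c_{km} z^{km}`, so `w ↦ ∑ c_{km} wᵐ` is again
a self-map of the disk, and therefore `|c_k| ≤ 1 - |c₀|²` for every `k ≥ 1`. With `a = |c₀|` and
`|z| < 1/3` the geometric tail is `< 1/2`, whence
`∑ |c_k z^k| < a + (1 - a²)/2 = 1 - (1 - a)²/2 ≤ 1`.
-/

open Metric Finset Set FormalMultilinearSeries ComplexConjugate

namespace Complex

theorem normSq_one_sub_conj_mul_sub_normSq_sub (a b : ℂ) :
    normSq (1 - conj a * b) - normSq (b - a) = (1 - normSq a) * (1 - normSq b) := by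
  simp only [normSq_apply, sub_re, sub_im, mul_re, mul_im, one_re, one_im, conj_re, conj_im]
  ring

theorem norm_sub_lt_norm_one_sub_conj_mul {a b : ℂ} (ha : ‖a‖ < 1) (hb : ‖b‖ < 1) :
    ‖b - a‖ < ‖1 - conj a * b‖ := by
  have ha' : normSq a < 1 := by rw [← Complex.sq_norm]; nlinarith [norm_nonneg a]
  have hb' : normSq b < 1 := by rw [← Complex.sq_norm]; nlinarith [norm_nonneg b]
  have hsq : ‖b - a‖ ^ 2 < ‖1 - conj a * b‖ ^ 2 := by
    rw [Complex.sq_norm, Complex.sq_norm]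
    nlinarith [normSq_one_sub_conj_mul_sub_normSq_sub a b]
  exact lt_of_pow_lt_pow_left₀ 2 (norm_nonneg _) hsq

/-- Schwarz–Pick at the centre: compose `f` with the disk automorphism sending `f c` to `0`. -/
theorem norm_deriv_le_one_sub_sq_div_of_mapsTo_ball {f : ℂ → ℂ} {c : ℂ} {R : ℝ}
    (hd : DifferentiableOn ℂ f (ball c R)) (hf : MapsTo f (ball c R) (ball 0 1)) (hR : 0 < R) :
    ‖deriv f c‖ ≤ (1 - ‖f c‖ ^ 2) / R := by
  set a := f c
  have hfz : ∀ z ∈ ball c R, ‖f z‖ < 1 := fun z hz => mem_ball_zero_iff.1 (hf hz)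
  have ha : ‖a‖ < 1 := hfz c (mem_ball_self hR)
  have hden : ∀ z ∈ ball c R, 1 - conj a * f z ≠ 0 := fun z hz =>
    norm_pos_iff.1 ((norm_nonneg _).trans_lt (norm_sub_lt_norm_one_sub_conj_mul ha (hfz z hz)))
  set g : ℂ → ℂ := fun z => (f z - a) / (1 - conj a * f z)
  have hgd : DifferentiableOn ℂ g (ball c R) :=
    (hd.sub_const a).div ((differentiableOn_const 1).sub (hd.const_mul _)) hden
  have hg : MapsTo g (ball c R) (closedBall (g c) 1) := by
    intro z hz
    rw [mem_closedBall, dist_eq_norm]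
    simp only [g, a, sub_self, zero_div, sub_zero, norm_div]
    exact div_le_one_of_le₀ (norm_sub_lt_norm_one_sub_conj_mul ha (hfz z hz)).le (norm_nonneg _)
  have hconj : 1 - conj a * a = ((1 - ‖a‖ ^ 2 : ℝ) : ℂ) := by
    rw [conj_mul']; push_cast; ring
  have hpos : 0 < 1 - ‖a‖ ^ 2 := by nlinarith [norm_nonneg a]
  have hgc : deriv g c = deriv f c / ((1 - ‖a‖ ^ 2 : ℝ) : ℂ) := by
    have hf' : HasDerivAt f (deriv f c) c :=
      (hd.differentiableAt (ball_mem_nhds c hR)).hasDerivAt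
    have hg' : HasDerivAt g _ c := (hf'.sub_const a).div ((hf'.const_mul (conj a)).const_sub 1)
      (hden c (mem_ball_self hR))
    have hne : ((1 - ‖a‖ ^ 2 : ℝ) : ℂ) ≠ 0 := by exact_mod_cast hpos.ne'
    rw [hg'.deriv, sub_self, zero_mul, sub_zero, hconj]
    field_simp
  have hschwarz := norm_deriv_le_div_of_mapsTo_ball hgd hg hR
  rw [hgc, norm_div, norm_real, Real.norm_of_nonneg hpos.le, div_le_div_iff₀ hpos hR] at hschwarz
  rw [le_div_iff₀ hR]
  linarith

end Complex

theorem IsPrimitiveRoot.sum_range_pow_pow {K : Type*} [Field K] {ζ : K} {k : ℕ}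
    (hζ : IsPrimitiveRoot ζ k) (n : ℕ) :
    ∑ j ∈ range k, (ζ ^ n) ^ j = if k ∣ n then (k : K) else 0 := by
  split_ifs with hkn
  · simp [(hζ.pow_eq_one_iff_dvd n).2 hkn]
  · rw [geom_sum_eq (fun h => hkn ((hζ.pow_eq_one_iff_dvd n).1 h)), ← pow_mul, mul_comm,
      pow_mul, hζ.pow_eq_one, one_pow, sub_self, zero_div]

theorem IsPrimitiveRoot.hasSum_mul_pow_mul {K : Type*} [Field K] [CharZero K]
    [TopologicalSpace K] [IsTopologicalRing K] {ζ : K} {k : ℕ} (hζ : IsPrimitiveRoot ζ k)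
    (hk : k ≠ 0) {c : ℕ → K} {z : K} (hs : ∀ j, Summable (fun n => c n * (ζ ^ j * z) ^ n)) :
    HasSum (fun m => c (k * m) * (z ^ k) ^ m)
      ((k : K)⁻¹ * ∑ j ∈ range k, ∑' n, c n * (ζ ^ j * z) ^ n) := by
  have hrot : HasSum (fun n => c n * z ^ n * if k ∣ n then (k : K) else 0)
      (∑ j ∈ range k, ∑' n, c n * (ζ ^ j * z) ^ n) := by
    convert hasSum_sum fun j _ => (hs j).hasSum using 2 with n
    simp only [← hζ.sum_range_pow_pow n, mul_sum, mul_pow, ← pow_mul, mul_comm n]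
    ring_nf
  have hsupp : ∀ n ∉ Set.range (k * ·), (c n * z ^ n * if k ∣ n then (k : K) else 0) = 0 := by
    rintro n hn
    rw [if_neg (fun ⟨m, hm⟩ => hn ⟨m, hm.symm⟩), mul_zero]
  have hsec := ((mul_right_injective₀ hk).hasSum_iff hsupp).2 hrot
  refine (hsec.mul_left (k : K)⁻¹).congr_fun ?_
  intro m
  have hk' : (k : K) ≠ 0 := Nat.cast_ne_zero.2 hk
  simp only [Function.comp_apply, dvd_mul_right, if_true, ← pow_mul]
  field_simp

theorem one_le_radius_ofScalars {c : ℕ → ℂ}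
    (hc : ∀ z : ℂ, ‖z‖ < 1 → Summable fun k => c k * z ^ k) : 1 ≤ (ofScalars ℂ c).radius := by
  refine ENNReal.le_of_forall_nnreal_lt fun r hr => (ofScalars ℂ c).le_radius_of_tendsto (l := 0) ?_
  have hr' : ‖((r : ℝ) : ℂ)‖ < 1 := by
    rw [Complex.norm_real, Real.norm_of_nonneg r.coe_nonneg]
    exact_mod_cast hr
  simpa [ofScalars_norm, norm_pow, Complex.norm_real] using (hc _ hr').tendsto_atTop_zero.norm

/-- Coefficient sequences of the Schur class (holomorphic self-maps of the unit disk), less the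
unimodular constants. -/
def IsSchurSeries (c : ℕ → ℂ) : Prop :=
  ∀ z : ℂ, ‖z‖ < 1 → Summable (fun k => c k * z ^ k) ∧ ‖∑' k, c k * z ^ k‖ < 1

namespace IsSchurSeries

variable {c : ℕ → ℂ}

theorem norm_coeff_zero_lt_one (hc : IsSchurSeries c) : ‖c 0‖ < 1 := by
  have h0 : ∑' k, c k * (0 : ℂ) ^ k = c 0 :=
    (tsum_eq_single 0 fun k hk => by rw [zero_pow hk, mul_zero]).trans (by simp)
  simpa [h0] using (hc 0 (by simp)).2

theorem norm_coeff_one_le (hc : IsSchurSeries c) : ‖c 1‖ ≤ 1 - ‖c 0‖ ^ 2 := by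
  set p := ofScalars ℂ c
  have hsum : p.sum = fun z : ℂ => ∑' k, c k * z ^ k := by
    simp only [p, ← ofScalarsSum.eq_1, ofScalarsSum_eq_tsum, smul_eq_mul]
  have hr : 1 ≤ p.radius := one_le_radius_ofScalars fun z hz => (hc z hz).1
  have hps := p.hasFPowerSeriesOnBall (zero_lt_one.trans_le hr)
  have hd : DifferentiableOn ℂ p.sum (ball 0 1) := by
    refine hps.differentiableOn.mono ?_
    rw [← eball_ofReal, ENNReal.ofReal_one]
    exact eball_subset_eball hr
  have hmaps : MapsTo p.sum (ball 0 1) (ball 0 1) := fun z hz => by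
    rw [hsum, mem_ball_zero_iff]
    exact (hc z (mem_ball_zero_iff.1 hz)).2
  have hderiv : deriv p.sum 0 = c 1 := by
    rw [hps.hasFPowerSeriesAt.hasDerivAt.deriv, ofScalars_apply_eq]
    simp
  have h0 : p.sum 0 = c 0 := by simp [p, ← ofScalarsSum.eq_1, ofScalarsSum_zero]
  simpa [hderiv, h0] using Complex.norm_deriv_le_one_sub_sq_div_of_mapsTo_ball hd hmaps one_pos

theorem comp_mul (hc : IsSchurSeries c) {k : ℕ} (hk : k ≠ 0) :
    IsSchurSeries (fun m => c (k * m)) := by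
  intro w hw
  obtain ⟨z, rfl⟩ := IsAlgClosed.exists_pow_nat_eq w (Nat.pos_of_ne_zero hk)
  have hz : ‖z‖ < 1 := by
    rwa [norm_pow, pow_lt_one_iff_of_nonneg (norm_nonneg z) hk] at hw
  set ζ := Complex.exp (2 * Real.pi * Complex.I / k)
  have hζ : IsPrimitiveRoot ζ k := Complex.isPrimitiveRoot_exp k hk
  have hrot : ∀ j : ℕ, ‖ζ ^ j * z‖ < 1 := fun j => by
    rwa [norm_mul, norm_pow, hζ.norm'_eq_one hk, one_pow, one_mul]
  have hsec := hζ.hasSum_mul_pow_mul hk fun j => (hc _ (hrot j)).1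
  refine ⟨hsec.summable, ?_⟩
  calc ‖∑' m, c (k * m) * (z ^ k) ^ m‖
      = (k : ℝ)⁻¹ * ‖∑ j ∈ range k, ∑' n, c n * (ζ ^ j * z) ^ n‖ := by
        rw [hsec.tsum_eq, norm_mul, norm_inv, Complex.norm_natCast]
    _ < (k : ℝ)⁻¹ * ∑ _j ∈ range k, 1 := by
        gcongr
        exact (norm_sum_le _ _).trans_lt
          (sum_lt_sum_of_nonempty (nonempty_range_iff.2 hk) fun j _ => (hc _ (hrot j)).2)
    _ = 1 := by simp [hk]

theorem norm_coeff_le (hc : IsSchurSeries c) {n : ℕ} (hn : n ≠ 0) : ‖c n‖ ≤ 1 - ‖c 0‖ ^ 2 := by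
  simpa using (hc.comp_mul hn).norm_coeff_one_le

end IsSchurSeries

theorem summable_norm_mul_pow_and_tsum_lt_one_of_norm_coeff_le {𝕜 : Type*} [NormedDivisionRing 𝕜]
    {c : ℕ → 𝕜} (h0 : ‖c 0‖ < 1) (hc : ∀ n ≠ 0, ‖c n‖ ≤ 1 - ‖c 0‖ ^ 2) {z : 𝕜}
    (hz : ‖z‖ < 1 / 3) :
    Summable (fun k => ‖c k * z ^ k‖) ∧ ∑' k, ‖c k * z ^ k‖ < 1 := by
  set a := ‖c 0‖
  set s := ‖z‖
  have ha : 0 ≤ a := norm_nonneg _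
  have hs : 0 ≤ s := norm_nonneg _
  have hterm : ∀ n, ‖c (n + 1) * z ^ (n + 1)‖ ≤ (1 - a ^ 2) * (s * s ^ n) := fun n => by
    rw [norm_mul, norm_pow, ← pow_succ']
    exact mul_le_mul_of_nonneg_right (hc _ n.succ_ne_zero) (by positivity)
  have hgeom : HasSum (fun n : ℕ => (1 - a ^ 2) * (s * s ^ n)) ((1 - a ^ 2) * (s * (1 - s)⁻¹)) :=
    ((hasSum_geometric_of_lt_one hs (by linarith)).mul_left s).mul_left _
  have htail : Summable fun n => ‖c (n + 1) * z ^ (n + 1)‖ :=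
    hgeom.summable.of_nonneg_of_le (fun _ => norm_nonneg _) hterm
  have hsum : Summable fun k => ‖c k * z ^ k‖ := (summable_nat_add_iff 1).1 htail
  refine ⟨hsum, ?_⟩
  have hratio : s * (1 - s)⁻¹ < 1 / 2 := by
    rw [← div_eq_mul_inv, div_lt_iff₀ (by linarith)]
    linarith
  have h1a : 0 < 1 - a ^ 2 := by nlinarith
  calc ∑' k, ‖c k * z ^ k‖ = a + ∑' n, ‖c (n + 1) * z ^ (n + 1)‖ := by
        rw [hsum.tsum_eq_zero_add]; simp [a]
    _ ≤ a + (1 - a ^ 2) * (s * (1 - s)⁻¹) := by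
        gcongr; exact hasSum_le hterm htail.hasSum hgeom
    _ < 1 := by nlinarith [mul_lt_mul_of_pos_left hratio h1a, sq_nonneg (1 - a)]

/-- Bohr's theorem, positive part: if a power series converges on the open unit
disk and its sum has modulus less than 1 there, then the sum of the moduli of
the terms is less than 1 on the disk of radius 1/3. -/
theorem bohr_positive (c : ℕ → ℂ)
    (hconv : ∀ z : ℂ, ‖z‖ < 1 → Summable (fun k => c k * z ^ k))
    (hbound : ∀ z : ℂ, ‖z‖ < 1 → ‖∑' k, c k * z ^ k‖ < 1) :
    ∀ z : ℂ, ‖z‖ < 1 / 3 →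
      Summable (fun k => ‖c k * z ^ k‖) ∧ ∑' k, ‖c k * z ^ k‖ < 1 := by
  have hc : IsSchurSeries c := fun z hz => ⟨hconv z hz, hbound z hz⟩
  exact fun z hz => summable_norm_mul_pow_and_tsum_lt_one_of_norm_coeff_le
    hc.norm_coeff_zero_lt_one (fun n hn => hc.norm_coeff_le hn) hz
end

section
/- (Boas–Khavinson, lower bound.) Let n ≥ 1 and let f(z) = Σ_α c_α z^α (sum over multi-indices α ∈ ℕⁿ, z^α = z₁^{α₁}···z_n^{α_n}) be a power series converging at every point of the open unit polydisk U₁ = {z ∈ ℂⁿ : |z_j| < 1 for all j}, with |f(z)| < 1 on U₁. Then for every z ∈ ℂⁿ with |z_j| < 1/(3√n) for all j, one has Σ_α |c_α z^α| < 1. -/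
/-!
Restricting `f` to a complex line `y ↦ f (y • w)` through a point `w` of the closed polydisk gives a
function of one variable, bounded by `1`, whose Taylor coefficients are the homogeneous parts
`P_m(w) = ∑_{|α| = m} c_α w^α`. Wiener's inequality `|a_m| ≤ 1 - |a_0|²` (Schwarz–Pick for `m = 1`,
then averaging over the `m`-th roots of unity) gives `|P_m(w)| ≤ 1 - |c_0|²`. Averaging `|P_m|²`
over the discrete torus of `(m+1)`-st roots of unity turns this into
`∑_{|α| = m} |c_α|² ≤ (1 - |c_0|²)²`, and Cauchy–Schwarz then bounds `∑_{|α| = m} |c_α z^α|` by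
`(1 - |c_0|²) qᵐ` with `q = ‖z‖₂ ≤ 1/3`. Summing the geometric series,
`∑ |c_α z^α| ≤ |c_0| + (1 - |c_0|²) / 2 < 1`.
-/

open Metric Finset ComplexConjugate

theorem one_sub_conj_mul_ne_zero {u v : ℂ} (hu : ‖u‖ < 1) (hv : ‖v‖ < 1) :
    1 - conj u * v ≠ 0 := by
  refine sub_ne_zero.2 fun h => ?_
  have : ‖conj u * v‖ < 1 := by
    rw [norm_mul, Complex.norm_conj]
    nlinarith [norm_nonneg u, norm_nonneg v]
  simp [← h] at this

theorem norm_div_one_sub_conj_mul_lt_one {u v : ℂ} (hu : ‖u‖ < 1) (hv : ‖v‖ < 1) :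
    ‖(v - u) / (1 - conj u * v)‖ < 1 := by
  have hden := one_sub_conj_mul_ne_zero hu hv
  rw [norm_div, div_lt_one (norm_pos_iff.2 hden)]
  have key : ‖1 - conj u * v‖ ^ 2 - ‖v - u‖ ^ 2 = (1 - ‖u‖ ^ 2) * (1 - ‖v‖ ^ 2) := by
    simp only [← Complex.normSq_eq_norm_sq, Complex.normSq_apply, Complex.sub_re,
      Complex.sub_im, Complex.mul_re, Complex.mul_im, Complex.one_re, Complex.one_im,
      Complex.conj_re, Complex.conj_im]
    ring
  have hpos : 0 < (1 - ‖u‖ ^ 2) * (1 - ‖v‖ ^ 2) := by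
    apply mul_pos <;> nlinarith [norm_nonneg u, norm_nonneg v]
  exact lt_of_pow_lt_pow_left₀ 2 (norm_nonneg _) (by linarith)

/-- The Schwarz–Pick lemma at the origin. -/
theorem norm_deriv_le_one_sub_sq {g : ℂ → ℂ} (hd : DifferentiableOn ℂ g (ball 0 1))
    (hmaps : Set.MapsTo g (ball 0 1) (ball 0 1)) : ‖deriv g 0‖ ≤ 1 - ‖g 0‖ ^ 2 := by
  have h0 : (0 : ℂ) ∈ ball 0 1 := mem_ball_self one_pos
  set u := g 0
  have hu : ‖u‖ < 1 := mem_ball_zero_iff.1 (hmaps h0)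
  have hg : ∀ y ∈ ball (0 : ℂ) 1, ‖g y‖ < 1 := fun y hy => mem_ball_zero_iff.1 (hmaps hy)
  have hden : ∀ y ∈ ball (0 : ℂ) 1, 1 - conj u * g y ≠ 0 :=
    fun y hy => one_sub_conj_mul_ne_zero hu (hg y hy)
  set φ : ℂ → ℂ := fun y => (g y - u) / (1 - conj u * g y)
  have hφd : DifferentiableOn ℂ φ (ball 0 1) :=
    (hd.sub_const u).div ((hd.const_mul _).const_sub 1) hden
  have hφmaps : Set.MapsTo φ (ball 0 1) (closedBall (φ 0) 1) := fun y hy => by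
    simpa [φ, u] using (norm_div_one_sub_conj_mul_lt_one hu (hg y hy)).le
  have hschwarz := Complex.norm_deriv_le_one_of_mapsTo_ball hφd hφmaps one_pos
  have hu2 : (0 : ℝ) < 1 - ‖u‖ ^ 2 := by nlinarith [norm_nonneg u]
  have hg' : HasDerivAt g (deriv g 0) 0 :=
    (hd.differentiableAt (ball_mem_nhds 0 one_pos)).hasDerivAt
  have hφ' : deriv φ 0 = deriv g 0 / ((1 - ‖u‖ ^ 2 : ℝ) : ℂ) := by
    have hu2' : (1 : ℂ) - conj u * u ≠ 0 := hden 0 h0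
    have hφ'' : HasDerivAt φ _ 0 :=
      (hg'.sub_const u).div ((hg'.const_mul (conj u)).const_sub 1) hu2'
    rw [hφ''.deriv, show g 0 = u from rfl, sub_self, zero_mul, sub_zero]
    rw [Complex.conj_mul'] at hu2' ⊢
    push_cast
    field_simp
  rwa [hφ', norm_div, Complex.norm_real, Real.norm_of_nonneg hu2.le, div_le_one hu2] at hschwarz

theorem eball_one_eq_ball {X : Type*} [PseudoMetricSpace X] (x : X) : eball x 1 = ball x 1 := by
  simpa using eball_coe (x := x) (ε := 1)

theorem hasFPowerSeriesOnBall_tsum_mul_pow {a : ℕ → ℂ}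
    (hs : ∀ y : ℂ, ‖y‖ < 1 → Summable fun j => ‖a j * y ^ j‖) :
    HasFPowerSeriesOnBall (fun y => ∑' j, a j * y ^ j)
      (FormalMultilinearSeries.ofScalars ℂ a) 0 1 where
  r_le := by
    refine ENNReal.le_of_forall_nnreal_lt fun r hr => ?_
    refine FormalMultilinearSeries.le_radius_of_summable_norm _ ?_
    have hr1 : ‖((r : ℝ) : ℂ)‖ < 1 := by simpa using (by exact_mod_cast hr : (r : ℝ) < 1)
    refine (hs _ hr1).congr fun n => ?_
    simp
  r_pos := one_pos
  hasSum {y} hy := by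
    rw [eball_one_eq_ball, mem_ball_zero_iff] at hy
    simpa [FormalMultilinearSeries.ofScalars_apply_eq, mul_comm] using ((hs y hy).of_norm).hasSum

theorem norm_coeff_one_le_one_sub_sq {a : ℕ → ℂ}
    (hs : ∀ y : ℂ, ‖y‖ < 1 → Summable fun j => ‖a j * y ^ j‖)
    (hb : ∀ y : ℂ, ‖y‖ < 1 → ‖∑' j, a j * y ^ j‖ < 1) :
    ‖a 1‖ ≤ 1 - ‖a 0‖ ^ 2 := by
  have hps := hasFPowerSeriesOnBall_tsum_mul_pow hs
  have hd : DifferentiableOn ℂ (fun y => ∑' j, a j * y ^ j) (ball 0 1) := by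
    simpa [eball_one_eq_ball] using hps.differentiableOn
  have h := norm_deriv_le_one_sub_sq hd fun y hy => mem_ball_zero_iff.2 (hb y (by simpa using hy))
  rw [hps.hasFPowerSeriesAt.deriv, ← hps.hasFPowerSeriesAt.coeff_zero fun _ => 1] at h
  simpa [FormalMultilinearSeries.ofScalars_apply_eq] using h

theorem IsPrimitiveRoot.sum_pow_pow_eq_ite {R : Type*} [CommRing R] [IsDomain R] {ζ : R}
    {N : ℕ} (hζ : IsPrimitiveRoot ζ N) (j : ℕ) :
    ∑ k ∈ range N, (ζ ^ k) ^ j = if N ∣ j then (N : R) else 0 := by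
  simp_rw [← pow_mul, mul_comm _ j, pow_mul]
  split_ifs with h
  · simp [(hζ.pow_eq_one_iff_dvd j).2 h]
  · have hgeom := geom_sum_mul (ζ ^ j) N
    rw [← pow_mul, mul_comm j N, pow_mul, hζ.pow_eq_one, one_pow, sub_self] at hgeom
    exact (mul_eq_zero.1 hgeom).resolve_right (sub_ne_zero.2 (mt (hζ.pow_eq_one_iff_dvd j).1 h))

theorem exists_pow_eq_of_norm_lt_one {μ : ℂ} (hμ : ‖μ‖ < 1) {m : ℕ} (hm : m ≠ 0) :
    ∃ l : ℂ, ‖l‖ < 1 ∧ l ^ m = μ := by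
  obtain ⟨l, hl⟩ := IsAlgClosed.exists_pow_nat_eq μ (Nat.pos_of_ne_zero hm)
  refine ⟨l, ?_, hl⟩
  rw [← hl, norm_pow] at hμ
  exact (pow_lt_one_iff_of_nonneg (norm_nonneg l) hm).1 hμ

theorem tsum_comp_mul_eq_average_rotations {a : ℕ → ℂ}
    (hs : ∀ y : ℂ, ‖y‖ < 1 → Summable fun j => ‖a j * y ^ j‖)
    {m : ℕ} {ω : ℂ} (hω : IsPrimitiveRoot ω m) (hm : m ≠ 0) {l : ℂ} (hl : ‖l‖ < 1) :
    ∑' j, a (j * m) * (l ^ m) ^ j = (m : ℂ)⁻¹ * ∑ k ∈ range m, ∑' j, a j * (ω ^ k * l) ^ j := by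
  have hωk : ∀ k, ‖ω ^ k * l‖ < 1 := fun k => by
    rwa [norm_mul, norm_pow, hω.norm'_eq_one hm, one_pow, one_mul]
  have hfilter : ∀ j, (m : ℂ)⁻¹ * ∑ k ∈ range m, a j * (ω ^ k * l) ^ j
      = if m ∣ j then a j * l ^ j else 0 := fun j => by
    have : ∑ k ∈ range m, a j * (ω ^ k * l) ^ j = a j * l ^ j * ∑ k ∈ range m, (ω ^ k) ^ j := by
      rw [Finset.mul_sum]
      exact Finset.sum_congr rfl fun k _ => by ring
    rw [this, hω.sum_pow_pow_eq_ite]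
    split_ifs
    · field_simp
    · simp
  have hsupp : Function.support (fun j => if m ∣ j then a j * l ^ j else 0)
      ⊆ Set.range (· * m) := fun j hj => by
    obtain ⟨i, rfl⟩ : m ∣ j := by_contra fun h => hj (if_neg h)
    exact ⟨i, mul_comm i m⟩
  rw [← Summable.tsum_finsetSum fun k _ => (hs _ (hωk k)).of_norm, ← tsum_mul_left,
    tsum_congr hfilter, ← (mul_left_injective₀ hm).tsum_eq hsupp]
  refine tsum_congr fun i => ?_
  simp [← pow_mul, mul_comm m i]

/-- Wiener's inequality. -/
theorem norm_coeff_le_one_sub_sq {a : ℕ → ℂ}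
    (hs : ∀ y : ℂ, ‖y‖ < 1 → Summable fun j => ‖a j * y ^ j‖)
    (hb : ∀ y : ℂ, ‖y‖ < 1 → ‖∑' j, a j * y ^ j‖ < 1) {m : ℕ} (hm : m ≠ 0) :
    ‖a m‖ ≤ 1 - ‖a 0‖ ^ 2 := by
  have hω := Complex.isPrimitiveRoot_exp m hm
  set ω := Complex.exp (2 * Real.pi * Complex.I / m)
  have hωk : ∀ k l, ‖l‖ < 1 → ‖ω ^ k * l‖ < 1 := fun k l hl => by
    rwa [norm_mul, norm_pow, hω.norm'_eq_one hm, one_pow, one_mul]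
  have hs' : ∀ μ : ℂ, ‖μ‖ < 1 → Summable fun j => ‖a (j * m) * μ ^ j‖ := fun μ hμ => by
    obtain ⟨l, hl, rfl⟩ := exists_pow_eq_of_norm_lt_one hμ hm
    refine ((hs l hl).comp_injective (mul_left_injective₀ hm)).congr fun j => ?_
    simp [← pow_mul, mul_comm j m]
  have hb' : ∀ μ : ℂ, ‖μ‖ < 1 → ‖∑' j, a (j * m) * μ ^ j‖ < 1 := fun μ hμ => by
    obtain ⟨l, hl, rfl⟩ := exists_pow_eq_of_norm_lt_one hμ hm
    have hmR : (0 : ℝ) < m := Nat.cast_pos.2 (Nat.pos_of_ne_zero hm)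
    rw [tsum_comp_mul_eq_average_rotations hs hω hm hl, norm_mul, norm_inv, Complex.norm_natCast,
      inv_mul_lt_iff₀ hmR]
    calc ‖∑ k ∈ range m, ∑' j, a j * (ω ^ k * l) ^ j‖
        ≤ ∑ k ∈ range m, ‖∑' j, a j * (ω ^ k * l) ^ j‖ := norm_sum_le _ _
      _ < ∑ _k ∈ range m, (1 : ℝ) :=
          Finset.sum_lt_sum_of_nonempty (nonempty_range_iff.2 hm) fun k _ => hb _ (hωk k l hl)
      _ = m * 1 := by simp
  simpa using norm_coeff_one_le_one_sub_sq hs' hb'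

theorem HasSum.lt_one_of_le_one_sub_sq_mul_pow {t : ℕ → ℝ} {s q : ℝ} (ht : HasSum t s)
    (ht0 : 0 ≤ t 0) (ht1 : t 0 < 1) (hq0 : 0 ≤ q) (hq : q ≤ 1 / 3)
    (htm : ∀ m, m ≠ 0 → t m ≤ (1 - t 0 ^ 2) * q ^ m) : s < 1 := by
  set B := 1 - t 0 ^ 2
  have hq1 : q < 1 := by linarith
  have hB : 0 ≤ B := by nlinarith
  calc s = t 0 + ∑' m, t (m + 1) := by rw [← ht.tsum_eq, ht.summable.tsum_eq_zero_add]
    _ ≤ t 0 + ∑' m : ℕ, B * q * q ^ m := by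
        refine add_le_add le_rfl (Summable.tsum_le_tsum (fun m => ?_)
          ((summable_nat_add_iff 1).2 ht.summable)
          ((summable_geometric_of_lt_one hq0 hq1).mul_left _))
        rw [mul_assoc, ← pow_succ']
        exact htm _ m.succ_ne_zero
    _ = t 0 + B * (q / (1 - q)) := by
        rw [tsum_mul_left, tsum_geometric_of_lt_one hq0 hq1, mul_assoc, div_eq_mul_inv]
    _ ≤ t 0 + B * (1 / 2) := by
        refine add_le_add le_rfl (mul_le_mul_of_nonneg_left ?_ hB)
        rw [div_le_iff₀ (by linarith)]
        linarith
    _ < 1 := by nlinarith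

section Polydisk

variable {ι : Type*} [Fintype ι]

theorem tsum_mul_prod_zero_pow (c : (ι → ℕ) → ℂ) :
    ∑' α : ι → ℕ, c α * ∏ j, (0 : ℂ) ^ α j = c 0 := by
  rw [tsum_eq_single 0 fun α hα => ?_]
  · simp
  obtain ⟨j, hj⟩ := Function.ne_iff.1 hα
  rw [Finset.prod_eq_zero (mem_univ j) (zero_pow hj), mul_zero]

variable [DecidableEq ι]

theorem HasSum.sum_piAntidiag_univ {E : Type*} [AddCommGroup E] [UniformSpace E]
    [IsUniformAddGroup E] [CompleteSpace E] [T2Space E] {F : (ι → ℕ) → E} {s : E}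
    (hF : HasSum F s) : HasSum (fun m => ∑ α ∈ univ.piAntidiag m, F α) s := by
  convert hF.tsum_fiberwise (fun α => ∑ j, α j) using 2 with m
  rw [← Finset.tsum_subtype', tsum_congr_set_coe]
  ext α
  simp [mem_piAntidiag]

def homogeneousPart (c : (ι → ℕ) → ℂ) (m : ℕ) (z : ι → ℂ) : ℂ :=
  ∑ α ∈ univ.piAntidiag m, c α * ∏ j, z j ^ α j

theorem homogeneousPart_zero (c : (ι → ℕ) → ℂ) (z : ι → ℂ) : homogeneousPart c 0 z = c 0 := by
  simp [homogeneousPart]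

theorem homogeneousPart_smul (c : (ι → ℕ) → ℂ) (m : ℕ) (y : ℂ) (w : ι → ℂ) :
    homogeneousPart c m (y • w) = homogeneousPart c m w * y ^ m := by
  rw [homogeneousPart, homogeneousPart, Finset.sum_mul]
  refine Finset.sum_congr rfl fun α hα => ?_
  rw [← (mem_piAntidiag.1 hα).1, ← Finset.prod_pow_eq_pow_sum]
  simp only [Pi.smul_apply, smul_eq_mul, mul_pow, Finset.prod_mul_distrib]
  ring

theorem norm_homogeneousPart_le {c : (ι → ℕ) → ℂ}
    (hconv : ∀ z : ι → ℂ, (∀ j, ‖z j‖ < 1) →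
      Summable fun α : ι → ℕ => ‖c α * ∏ j, z j ^ α j‖)
    (hbound : ∀ z : ι → ℂ, (∀ j, ‖z j‖ < 1) → ‖∑' α : ι → ℕ, c α * ∏ j, z j ^ α j‖ < 1)
    {w : ι → ℂ} (hw : ∀ j, ‖w j‖ ≤ 1) {m : ℕ} (hm : m ≠ 0) :
    ‖homogeneousPart c m w‖ ≤ 1 - ‖c 0‖ ^ 2 := by
  have hyw : ∀ y : ℂ, ‖y‖ < 1 → ∀ j, ‖(y • w) j‖ < 1 := fun y hy j => by
    simpa using (mul_le_of_le_one_right (norm_nonneg y) (hw j)).trans_lt hy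
  have hs : ∀ y : ℂ, ‖y‖ < 1 → Summable fun k => ‖homogeneousPart c k w * y ^ k‖ :=
    fun y hy => by
      simp_rw [← homogeneousPart_smul]
      exact Summable.of_nonneg_of_le (fun _ => norm_nonneg _) (fun k => norm_sum_le _ _)
        (hconv _ (hyw y hy)).hasSum.sum_piAntidiag_univ.summable
  have hb : ∀ y : ℂ, ‖y‖ < 1 → ‖∑' k, homogeneousPart c k w * y ^ k‖ < 1 := fun y hy => by
    simp_rw [← homogeneousPart_smul, homogeneousPart]
    rw [(hconv _ (hyw y hy)).of_norm.hasSum.sum_piAntidiag_univ.tsum_eq]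
    exact hbound _ (hyw y hy)
  simpa [homogeneousPart_zero] using norm_coeff_le_one_sub_sq hs hb hm

theorem IsPrimitiveRoot.sum_pow_pow_mul_conj_pow_pow {ζ : ℂ} {N : ℕ} (hζ : IsPrimitiveRoot ζ N)
    {a b : ℕ} (ha : a < N) (hb : b < N) :
    ∑ t ∈ range N, (ζ ^ t) ^ a * conj ((ζ ^ t) ^ b) = if a = b then (N : ℂ) else 0 := by
  have hconj : ∀ t, conj ((ζ ^ t) ^ b) = (ζ ^ t) ^ (N - b) := fun t => by
    have hnorm : ‖(ζ ^ t) ^ b‖ = 1 := by simp [hζ.norm'_eq_one (by omega)]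
    have hinv : (ζ ^ t) ^ b * (ζ ^ t) ^ (N - b) = 1 := by
      rw [← pow_add, Nat.add_sub_cancel' hb.le, ← pow_mul, mul_comm, pow_mul, hζ.pow_eq_one,
        one_pow]
    calc conj ((ζ ^ t) ^ b) = conj ((ζ ^ t) ^ b) * ((ζ ^ t) ^ b * (ζ ^ t) ^ (N - b)) := by
          rw [hinv, mul_one]
      _ = (ζ ^ t) ^ (N - b) := by rw [← mul_assoc, Complex.conj_mul', hnorm]; simp
  simp_rw [hconj, ← pow_add]
  rw [hζ.sum_pow_pow_eq_ite]
  by_cases hab : a = b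
  · simp [hab, Nat.add_sub_cancel' hb.le]
  · rw [if_neg hab, if_neg fun hdvd => hab ?_]
    have := Nat.eq_of_dvd_of_lt_two_mul (by omega) hdvd (by omega)
    omega

/-- Parseval's identity for the discrete torus of `N`-th roots of unity. -/
theorem sum_norm_sq_sum_mul_prod_pow {ζ : ℂ} {N : ℕ} (hζ : IsPrimitiveRoot ζ N)
    {S : Finset (ι → ℕ)} (hS : ∀ α ∈ S, ∀ j, α j < N) (d : (ι → ℕ) → ℂ) :
    ∑ k ∈ Fintype.piFinset fun _ : ι => range N, ‖∑ α ∈ S, d α * ∏ j, (ζ ^ k j) ^ α j‖ ^ 2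
      = (N : ℝ) ^ Fintype.card ι * ∑ α ∈ S, ‖d α‖ ^ 2 := by
  have horth : ∀ α ∈ S, ∀ β ∈ S, ∑ k ∈ Fintype.piFinset fun _ : ι => range N,
      ∏ j, (ζ ^ k j) ^ α j * conj ((ζ ^ k j) ^ β j)
        = if α = β then (N : ℂ) ^ Fintype.card ι else 0 := fun α hα β hβ => by
    rw [← Finset.prod_univ_sum (fun _ => range N)
      (fun j t => (ζ ^ t) ^ α j * conj ((ζ ^ t) ^ β j))]
    simp_rw [hζ.sum_pow_pow_mul_conj_pow_pow (hS α hα _) (hS β hβ _)]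
    rw [Finset.prod_ite_zero]
    simp [funext_iff]
  apply Complex.ofReal_injective
  push_cast
  simp_rw [← Complex.mul_conj', map_sum, map_mul, map_prod, Finset.sum_mul_sum,
    mul_mul_mul_comm _ (∏ j, _), ← Finset.prod_mul_distrib]
  rw [Finset.sum_comm, Finset.mul_sum]
  refine Finset.sum_congr rfl fun α hα => ?_
  rw [Finset.sum_comm]
  simp_rw [← Finset.mul_sum]
  rw [Finset.sum_congr rfl fun β hβ => by rw [horth α hα β hβ]]
  simp [hα, mul_comm]

theorem sum_norm_sq_le_of_norm_homogeneousPart_le {c : (ι → ℕ) → ℂ} {m : ℕ} {B : ℝ}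
    (h : ∀ w : ι → ℂ, (∀ j, ‖w j‖ = 1) → ‖homogeneousPart c m w‖ ≤ B) :
    ∑ α ∈ univ.piAntidiag m, ‖c α‖ ^ 2 ≤ B ^ 2 := by
  have hζ := Complex.isPrimitiveRoot_exp (m + 1) m.succ_ne_zero
  set ζ := Complex.exp (2 * Real.pi * Complex.I / (m + 1 : ℕ))
  have hS : ∀ α ∈ (univ : Finset ι).piAntidiag m, ∀ j, α j < m + 1 := fun α hα j => by
    have := Finset.single_le_sum (f := α) (fun i _ => Nat.zero_le (α i)) (mem_univ j)
    rw [(mem_piAntidiag.1 hα).1] at this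
    omega
  have hB : 0 ≤ B := (norm_nonneg _).trans (h 1 fun _ => norm_one)
  have hN : (0 : ℝ) < ((m + 1 : ℕ) : ℝ) ^ Fintype.card ι := by positivity
  refine le_of_mul_le_mul_left ?_ hN
  rw [← sum_norm_sq_sum_mul_prod_pow hζ hS c]
  calc ∑ k ∈ Fintype.piFinset fun _ : ι => range (m + 1), ‖homogeneousPart c m (ζ ^ k ·)‖ ^ 2
      ≤ ∑ _k ∈ Fintype.piFinset fun _ : ι => range (m + 1), B ^ 2 := by
        refine Finset.sum_le_sum fun k _ => pow_le_pow_left₀ (norm_nonneg _) (h _ fun j => ?_) 2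
        simp [hζ.norm'_eq_one m.succ_ne_zero]
    _ = ((m + 1 : ℕ) : ℝ) ^ Fintype.card ι * B ^ 2 := by simp

theorem sum_piAntidiag_prod_pow_le_pow_sum (x : ι → ℝ) (hx : ∀ j, 0 ≤ x j) (m : ℕ) :
    ∑ α ∈ univ.piAntidiag m, ∏ j, x j ^ α j ≤ (∑ j, x j) ^ m := by
  rw [Finset.sum_pow_eq_sum_piAntidiag]
  refine Finset.sum_le_sum fun α _ => le_mul_of_one_le_left
    (Finset.prod_nonneg fun j _ => pow_nonneg (hx j) _) ?_
  exact_mod_cast Nat.multinomial_pos _ _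

theorem sq_sum_norm_mul_prod_pow_le (c : (ι → ℕ) → ℂ) (z : ι → ℂ) (m : ℕ) :
    (∑ α ∈ univ.piAntidiag m, ‖c α * ∏ j, z j ^ α j‖) ^ 2
      ≤ (∑ α ∈ univ.piAntidiag m, ‖c α‖ ^ 2) * (∑ j, ‖z j‖ ^ 2) ^ m := by
  simp only [norm_mul, norm_prod, norm_pow]
  refine (Finset.sum_mul_sq_le_sq_mul_sq _ _ _).trans (mul_le_mul_of_nonneg_left ?_
    (Finset.sum_nonneg fun _ _ => sq_nonneg _))
  simp_rw [← Finset.prod_pow, ← pow_mul, mul_comm _ 2, pow_mul]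
  exact sum_piAntidiag_prod_pow_le_pow_sum _ (fun j => sq_nonneg _) m

theorem tsum_norm_lt_one_of_sum_norm_sq_le {c : (ι → ℕ) → ℂ}
    (hconv : ∀ z : ι → ℂ, (∀ j, ‖z j‖ < 1) →
      Summable fun α : ι → ℕ => ‖c α * ∏ j, z j ^ α j‖)
    (hbound : ∀ z : ι → ℂ, (∀ j, ‖z j‖ < 1) → ‖∑' α : ι → ℕ, c α * ∏ j, z j ^ α j‖ < 1)
    {z : ι → ℂ} (hz : ∑ j, ‖z j‖ ^ 2 ≤ 1 / 9) :
    ∑' α, ‖c α * ∏ j, z j ^ α j‖ < 1 := by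
  set q := √(∑ j, ‖z j‖ ^ 2)
  have hq : q ≤ 1 / 3 := Real.sqrt_le_iff.2 ⟨by norm_num, hz.trans_eq (by norm_num)⟩
  have hzj : ∀ j, ‖z j‖ < 1 := fun j => by
    have := (Finset.single_le_sum (fun i _ => sq_nonneg ‖z i‖) (mem_univ j)).trans hz
    nlinarith [norm_nonneg (z j)]
  set t : ℕ → ℝ := fun m => ∑ α ∈ univ.piAntidiag m, ‖c α * ∏ j, z j ^ α j‖
  have ht0 : t 0 = ‖c 0‖ := by simp [t]
  have hc0 : ‖c 0‖ < 1 := by simpa [tsum_mul_prod_zero_pow] using hbound 0 fun _ => by simp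
  have hB : 0 ≤ 1 - ‖c 0‖ ^ 2 := by nlinarith [norm_nonneg (c 0)]
  have ht : HasSum t (∑' α, ‖c α * ∏ j, z j ^ α j‖) := (hconv z hzj).hasSum.sum_piAntidiag_univ
  refine ht.lt_one_of_le_one_sub_sq_mul_pow (ht0 ▸ norm_nonneg _) (ht0 ▸ hc0)
    (Real.sqrt_nonneg _) hq fun m hm => ?_
  have hcoef := sum_norm_sq_le_of_norm_homogeneousPart_le fun w hw =>
    norm_homogeneousPart_le hconv hbound (fun j => (hw j).le) hm
  refine le_of_pow_le_pow_left₀ two_ne_zero (ht0 ▸ mul_nonneg hB (by positivity)) ?_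
  calc t m ^ 2 ≤ (1 - ‖c 0‖ ^ 2) ^ 2 * (∑ j, ‖z j‖ ^ 2) ^ m :=
        (sq_sum_norm_mul_prod_pow_le c z m).trans (mul_le_mul_of_nonneg_right hcoef (by positivity))
    _ = ((1 - t 0 ^ 2) * q ^ m) ^ 2 := by
        rw [ht0, mul_pow, ← pow_mul, mul_comm m, pow_mul, Real.sq_sqrt (by positivity)]

end Polydisk

theorem boas_khavinson_lower_general (n : ℕ) (c : (Fin n → ℕ) → ℂ)
    (hconv : ∀ z : Fin n → ℂ, (∀ j, ‖z j‖ < 1) →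
      Summable (fun α : Fin n → ℕ => ‖c α * ∏ j, z j ^ α j‖))
    (hbound : ∀ z : Fin n → ℂ, (∀ j, ‖z j‖ < 1) →
      ‖∑' α : Fin n → ℕ, c α * ∏ j, z j ^ α j‖ < 1) :
    ∀ z : Fin n → ℂ, (∀ j, ‖z j‖ < 1 / (3 * Real.sqrt n)) →
      ∑' α : Fin n → ℕ, ‖c α * ∏ j, z j ^ α j‖ < 1 := by
  intro z hz
  refine tsum_norm_lt_one_of_sum_norm_sq_le hconv hbound ?_
  have hzj : ∀ j, ‖z j‖ ^ 2 ≤ 1 / (9 * n) := fun j => by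
    have := pow_le_pow_left₀ (norm_nonneg _) (hz j).le 2
    rw [div_pow, mul_pow, Real.sq_sqrt n.cast_nonneg] at this
    norm_num at this ⊢
    exact this
  calc ∑ j, ‖z j‖ ^ 2 ≤ ∑ _j : Fin n, 1 / (9 * (n : ℝ)) := Finset.sum_le_sum fun j _ => hzj j
    _ ≤ 1 / 9 := by
        rcases n.eq_zero_or_pos with rfl | _
        · norm_num
        · simp [field]

/-- Boas–Khavinson lower bound for the Bohr radius of the unit polydisk. -/
theorem boas_khavinson_lower (n : ℕ) (hn : 1 ≤ n) (c : (Fin n → ℕ) → ℂ)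
    (hconv : ∀ z : Fin n → ℂ, (∀ j, ‖z j‖ < 1) →
      Summable (fun α : Fin n → ℕ => ‖c α * ∏ j, z j ^ α j‖))
    (hbound : ∀ z : Fin n → ℂ, (∀ j, ‖z j‖ < 1) →
      ‖∑' α : Fin n → ℕ, c α * ∏ j, z j ^ α j‖ < 1) :
    ∀ z : Fin n → ℂ, (∀ j, ‖z j‖ < 1 / (3 * Real.sqrt n)) →
      ∑' α : Fin n → ℕ, ‖c α * ∏ j, z j ^ α j‖ < 1 :=
  boas_khavinson_lower_general n c hconv hbound
end

section
/- (Boas–Khavinson transfer to Reinhardt domains.) Let D ⊆ ℂⁿ be a complete n-circular (Reinhardt) domain, i.e. an open set containing 0 such that z ∈ D and |λ_j| ≤ 1 for all j implies (λ₁z₁,…,λ_nz_n) ∈ D. Let r ∈ (0,1) be such that the Bohr property holds for the unit polydisk at radius r (i.e. every power series bounded in modulus by 1 on the unit polydisk satisfies Σ_α |c_α z^α| < 1 for all z with max_j|z_j| < r). Then every power series Σ_α c_α z^α converging at each point of D and satisfying |Σ_α c_α z^α| < 1 on D satisfies Σ_α |c_α z^α| < 1 at every point z of the homothetic domain r·D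 = {r w : w ∈ D}. -/
/-- Boas–Khavinson transfer: if the Bohr property holds for the unit polydisk
at radius `r`, then it holds for any complete `n`-circular (Reinhardt) domain
`D` on the homothetic domain `r • D`. -/
theorem bohr_transfer_reinhardt (n : ℕ) (hn : 1 ≤ n) (D : Set (Fin n → ℂ))
    (hDopen : IsOpen D) (hD0 : (0 : Fin n → ℂ) ∈ D)
    (hDcirc : ∀ z ∈ D, ∀ lam : Fin n → ℂ, (∀ j, ‖lam j‖ ≤ 1) →
      (fun j => lam j * z j) ∈ D)
    (r : ℝ) (hr0 : 0 < r) (hr1 : r < 1)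
    (hpoly : ∀ c : (Fin n → ℕ) → ℂ,
      (∀ z : Fin n → ℂ, (∀ j, ‖z j‖ < 1) →
        Summable (fun α : Fin n → ℕ => ‖c α * ∏ j, z j ^ α j‖)) →
      (∀ z : Fin n → ℂ, (∀ j, ‖z j‖ < 1) →
        ‖∑' α : Fin n → ℕ, c α * ∏ j, z j ^ α j‖ < 1) →
      ∀ z : Fin n → ℂ, (∀ j, ‖z j‖ < r) →
        ∑' α : Fin n → ℕ, ‖c α * ∏ j, z j ^ α j‖ < 1)
    (c : (Fin n → ℕ) → ℂ)
    (hconv : ∀ z ∈ D, Summable (fun α : Fin n → ℕ => ‖c α * ∏ j, z j ^ α j‖))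
    (hbound : ∀ z ∈ D, ‖∑' α : Fin n → ℕ, c α * ∏ j, z j ^ α j‖ < 1) :
    ∀ z ∈ (fun w : Fin n → ℂ => r • w) '' D,
      ∑' α : Fin n → ℕ, ‖c α * ∏ j, z j ^ α j‖ < 1 := by
  rintro z ⟨w, hw, rfl⟩
  -- find t > 1 with t • w ∈ D
  have hcont : Continuous fun t : ℝ => t • w := continuous_id.smul continuous_const
  have hnhds : {t : ℝ | t • w ∈ D} ∈ nhds (1 : ℝ) :=
    (hDopen.preimage hcont).mem_nhds (by simpa using hw)
  obtain ⟨ε, hε, hball⟩ := Metric.mem_nhds_iff.mp hnhds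
  set t : ℝ := 1 + ε / 2 with ht
  have ht1 : 1 < t := by simp [ht]; positivity
  have ht0 : (0:ℝ) < t := lt_trans one_pos ht1
  have htD : t • w ∈ D := by
    apply hball
    simp only [Metric.mem_ball, Real.dist_eq, ht]
    rw [show (1 + ε / 2 - 1) = ε / 2 by ring, abs_of_pos (by positivity)]
    linarith
  set w' : Fin n → ℂ := t • w with hw'
  set c' : (Fin n → ℕ) → ℂ := fun α => c α * ∏ j, w' j ^ α j with hc'
  have key : ∀ (u : Fin n → ℂ) (α : Fin n → ℕ),
      c α * ∏ j, (u j * w' j) ^ α j = c' α * ∏ j, u j ^ α j := by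
    intro u α
    simp only [hc', mul_pow, Finset.prod_mul_distrib]
    ring
  have hS : ∀ u : Fin n → ℂ, (∀ j, ‖u j‖ < 1) →
      Summable (fun α : Fin n → ℕ => ‖c' α * ∏ j, u j ^ α j‖) := by
    intro u hu
    have := hconv _ (hDcirc _ htD u fun j => (hu j).le)
    exact this.congr fun α => congrArg norm (key u α)
  have hB : ∀ u : Fin n → ℂ, (∀ j, ‖u j‖ < 1) →
      ‖∑' α : Fin n → ℕ, c' α * ∏ j, u j ^ α j‖ < 1 := by
    intro u hu
    have := hbound _ (hDcirc _ htD u fun j => (hu j).le)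
    rwa [tsum_congr fun α => key u α] at this
  have hmain := hpoly c' hS hB (fun _ => ((r / t : ℝ) : ℂ)) (by
    intro j
    simp only [Complex.norm_real, Real.norm_eq_abs]
    rw [abs_of_pos (by positivity)]
    exact div_lt_self hr0 ht1)
  have hfin : (fun α : Fin n → ℕ => ‖c' α * ∏ j, (((r / t : ℝ) : ℂ)) ^ α j‖)
      = fun α => ‖c α * ∏ j, (r • w) j ^ α j‖ := by
    funext α
    rw [← key]
    congr 1
    congr 1
    apply Finset.prod_congr rfl
    intro j _
    congr 1
    simp only [hw', Pi.smul_apply, Complex.real_smul]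
    have htc : (t:ℂ) ≠ 0 := by exact_mod_cast ht0.ne'
    push_cast
    field_simp
  rwa [hfin] at hmain
end

section
/- (Theorem 6.) Let n ≥ 1 and let D⁰ = {z ∈ ℂⁿ : |z₁| + … + |z_n| < 1} be the unit hypercone. For every real r with r ≥ 0.446663/n there exists a power series Σ_α c_α z^α converging at every point of D⁰ with |Σ_α c_α z^α| < 1 on D⁰, such that Σ_α |c_α| · r^{|α|} · (α₁^{α₁}···α_n^{α_n}/|α|^{|α|}) ≥ 1 (convention 0⁰ = 1). In other words, the Bohr-type inequality Σ_α sup_{z ∈ r·D⁰}|c_α z^α| < 1 fails for such r, so B_n(D⁰) < 0.446663/n. -/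
/-!
The extremal function is `z ↦ φ(z₁ + ⋯ + zₙ)`, where `φ(w) = (a - w)/(1 - a w)` is the Blaschke
factor with `a = 0.999999`; it maps the hypercone into the unit disc. Its coefficients are
`c_α = φ_{|α|} · |α|!/α!`, so, as `α^α ≥ 1` and `∑_{|α| = k} |α|!/α! = nᵏ`, the Bohr sum at radius
`r` is at least `∑_k |φ_k| (n r)ᵏ / kᵏ`. Writing `t = n r`, this is `≥ 1` iff
`(1 + a) ∑_{k ≥ 1} a^(k-1) tᵏ/kᵏ ≥ 1`; as `a → 1` the condition becomes `∑_{k ≥ 1} tᵏ/kᵏ ≥ 1/2`,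
whose threshold lies just below `0.446663`. Seven terms already suffice.
-/

open Finset

noncomputable def blaschkeCoeff (a : ℝ) : ℕ → ℝ
  | 0 => a
  | k + 1 => -(1 - a ^ 2) * a ^ k

section Blaschke

variable {a : ℝ}

lemma abs_blaschkeCoeff_succ (ha : |a| ≤ 1) (k : ℕ) :
    |blaschkeCoeff a (k + 1)| = (1 - a ^ 2) * |a| ^ k := by
  have : 0 ≤ 1 - a ^ 2 := by nlinarith [sq_abs a, abs_nonneg a]
  rw [blaschkeCoeff, abs_mul, abs_neg, abs_of_nonneg this, abs_pow]

lemma abs_blaschkeCoeff_le_one (ha : |a| ≤ 1) : ∀ k, |blaschkeCoeff a k| ≤ 1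
  | 0 => ha
  | k + 1 => by
    rw [abs_blaschkeCoeff_succ ha]
    have : 0 ≤ 1 - a ^ 2 := by nlinarith [sq_abs a, abs_nonneg a]
    nlinarith [pow_le_one₀ (abs_nonneg a) ha (n := k), pow_nonneg (abs_nonneg a) k, sq_nonneg a]

lemma hasSum_blaschkeCoeff_mul_pow {w : ℂ} (ha : |a| ≤ 1) (hw : ‖w‖ < 1) :
    HasSum (fun k => (blaschkeCoeff a k : ℂ) * w ^ k) ((a - w) / (1 - a * w)) := by
  have haw : ‖(a : ℂ) * w‖ < 1 := by
    rw [norm_mul, Complex.norm_real, Real.norm_eq_abs]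
    nlinarith [norm_nonneg w, abs_nonneg a]
  have hne : 1 - (a : ℂ) * w ≠ 0 := by
    intro h
    rw [show (a : ℂ) * w = 1 by linear_combination -h, norm_one] at haw
    exact haw.false
  have htail := (hasSum_geometric_of_norm_lt_one haw).mul_left (-(1 - (a : ℂ) ^ 2) * w)
  have hterms : (fun k => (blaschkeCoeff a (k + 1) : ℂ) * w ^ (k + 1))
      = fun k => -(1 - (a : ℂ) ^ 2) * w * ((a : ℂ) * w) ^ k := by
    funext k
    simp only [blaschkeCoeff]
    push_cast
    ring
  have hvalue : (a : ℂ) + -(1 - (a : ℂ) ^ 2) * w * (1 - a * w)⁻¹ = (a - w) / (1 - a * w) := by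
    field_simp
    ring
  rw [← hterms] at htail
  have := HasSum.zero_add (f := fun k => (blaschkeCoeff a k : ℂ) * w ^ k) htail
  rwa [show blaschkeCoeff a 0 = a from rfl, pow_zero, mul_one, hvalue] at this

lemma normSq_one_sub_mul_sub_normSq_sub (a : ℝ) (w : ℂ) :
    Complex.normSq (1 - a * w) - Complex.normSq (a - w) =
      (1 - a ^ 2) * (1 - Complex.normSq w) := by
  simp only [Complex.normSq_apply, Complex.sub_re, Complex.sub_im, Complex.mul_re,
    Complex.mul_im, Complex.one_re, Complex.one_im, Complex.ofReal_re, Complex.ofReal_im]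
  ring

lemma norm_blaschke_lt_one {w : ℂ} (ha : |a| < 1) (hw : ‖w‖ < 1) :
    ‖(a - w) / (1 - a * w)‖ < 1 := by
  have hpos : 0 < (1 - a ^ 2) * (1 - Complex.normSq w) := by
    rw [Complex.normSq_eq_norm_sq]
    apply mul_pos <;> nlinarith [sq_abs a, abs_nonneg a, norm_nonneg w]
  have hlt : ‖(a : ℂ) - w‖ ^ 2 < ‖1 - (a : ℂ) * w‖ ^ 2 := by
    rw [← Complex.normSq_eq_norm_sq, ← Complex.normSq_eq_norm_sq]
    linarith [normSq_one_sub_mul_sub_normSq_sub a w]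
  have hnorm := lt_of_pow_lt_pow_left₀ 2 (norm_nonneg _) hlt
  rwa [norm_div, div_lt_one ((norm_nonneg _).trans_lt hnorm)]

lemma one_le_sum_range_abs_blaschkeCoeff_mul_pow_div_pow {t : ℝ} (ht : 0.446663 ≤ t) :
    1 ≤ ∑ k ∈ range 7, |blaschkeCoeff 0.999999 k| * t ^ k / k ^ k := by
  have h : 1 ≤ ∑ k ∈ range 7, |blaschkeCoeff 0.999999 k| * 0.446663 ^ k / k ^ k := by
    norm_num [sum_range_succ, blaschkeCoeff]
  exact h.trans (sum_le_sum fun k _ => by gcongr)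

end Blaschke

section Fibers

variable {ι M : Type*} [Fintype ι] [DecidableEq ι] [AddCommMonoid M] [TopologicalSpace M]

lemma hasSum_subtype_sum_eq (f : (ι → ℕ) → M) (k : ℕ) :
    HasSum (fun α : {α : ι → ℕ // ∑ j, α j = k} => f α) (∑ α ∈ piAntidiag univ k, f α) :=
  (Equiv.subtypeEquivRight (by simp [mem_piAntidiag])).hasSum_iff.mpr
    ((piAntidiag univ k).hasSum f)

theorem HasSum.sum_piAntidiag [ContinuousAdd M] [RegularSpace M] {f : (ι → ℕ) → M} {s : M}
    (hf : HasSum f s) : HasSum (fun k => ∑ α ∈ piAntidiag univ k, f α) s :=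
  HasSum.sigma ((Equiv.sigmaFiberEquiv fun α : ι → ℕ => ∑ j, α j).hasSum_iff.mpr hf)
    (hasSum_subtype_sum_eq f)

lemma summable_of_summable_sum_piAntidiag {f : (ι → ℕ) → ℝ} (hf : ∀ α, 0 ≤ f α)
    (h : Summable fun k => ∑ α ∈ piAntidiag univ k, f α) : Summable f := by
  rw [← (Equiv.sigmaFiberEquiv fun α : ι → ℕ => ∑ j, α j).summable_iff]
  refine (summable_sigma_of_nonneg fun _ => hf _).mpr
    ⟨fun k => (hasSum_subtype_sum_eq f k).summable,
      h.congr fun k => (hasSum_subtype_sum_eq f k).tsum_eq.symm⟩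

lemma ofReal_sum_range_sum_piAntidiag_le_tsum {f : (ι → ℕ) → ℝ} (hf : ∀ α, 0 ≤ f α) (N : ℕ) :
    ENNReal.ofReal (∑ k ∈ range N, ∑ α ∈ piAntidiag univ k, f α)
      ≤ ∑' α, ENNReal.ofReal (f α) := by
  rw [ENNReal.ofReal_sum_of_nonneg fun k _ => sum_nonneg fun α _ => hf α,
    ENNReal.summable.hasSum.sum_piAntidiag.tsum_eq.symm]
  simp only [ENNReal.ofReal_sum_of_nonneg fun α _ => hf α]
  exact ENNReal.sum_le_tsum _

end Fibers

variable {ι : Type*} [Fintype ι]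

def sumCompCoeff {R : Type*} [CommSemiring R] (b : ℕ → R) (α : ι → ℕ) : R :=
  b (∑ j, α j) * Nat.multinomial univ α

-- `sup_{z ∈ D⁰} |z^α|`, with Lean's `0 ^ 0 = 1` matching the convention `0⁰ = 1`
noncomputable def hyperconeMonomialSup (α : ι → ℕ) : ℝ :=
  (∏ j, (α j : ℝ) ^ α j) / ((∑ j, α j : ℕ) : ℝ) ^ ∑ j, α j

lemma inv_pow_le_hyperconeMonomialSup (α : ι → ℕ) :
    (((∑ j, α j : ℕ) : ℝ) ^ ∑ j, α j)⁻¹ ≤ hyperconeMonomialSup α := by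
  have hprod : 1 ≤ ∏ j, (α j : ℝ) ^ α j := one_le_prod fun j _ => by
    rcases Nat.eq_zero_or_pos (α j) with h | h
    · simp [h]
    · exact one_le_pow₀ (by exact_mod_cast h)
  rw [hyperconeMonomialSup, div_eq_mul_inv]
  exact le_mul_of_one_le_left (by positivity) hprod

section Normed

variable {𝕜 : Type*} [RCLike 𝕜] (b : ℕ → 𝕜)

lemma norm_sumCompCoeff (α : ι → ℕ) :
    ‖sumCompCoeff b α‖ = ‖b (∑ j, α j)‖ * Nat.multinomial univ α := by
  rw [sumCompCoeff, norm_mul, RCLike.norm_natCast]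

lemma norm_sumCompCoeff_mul_prod_pow (z : ι → 𝕜) (α : ι → ℕ) :
    ‖sumCompCoeff b α * ∏ j, z j ^ α j‖ = sumCompCoeff (‖b ·‖) α * ∏ j, ‖z j‖ ^ α j := by
  rw [norm_mul, norm_sumCompCoeff, norm_prod]
  simp only [sumCompCoeff, norm_pow]

end Normed

variable [DecidableEq ι]

lemma sum_piAntidiag_sumCompCoeff_mul_prod_pow {R : Type*} [CommSemiring R] (b : ℕ → R)
    (z : ι → R) (k : ℕ) :
    ∑ α ∈ piAntidiag univ k, sumCompCoeff b α * ∏ j, z j ^ α j = b k * (∑ j, z j) ^ k := by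
  rw [sum_pow_eq_sum_piAntidiag, mul_sum]
  refine sum_congr rfl fun α hα => ?_
  rw [sumCompCoeff, (mem_piAntidiag.mp hα).1, mul_assoc]

lemma sum_piAntidiag_multinomial (k : ℕ) :
    ∑ α ∈ piAntidiag (univ : Finset ι) k, (Nat.multinomial univ α : ℝ) = Fintype.card ι ^ k := by
  simpa using (sum_pow_eq_sum_piAntidiag univ (fun _ : ι => (1 : ℝ)) k).symm

section Normed

variable {𝕜 : Type*} [RCLike 𝕜] {b : ℕ → 𝕜}

lemma summable_norm_sumCompCoeff_mul_prod_pow {z : ι → 𝕜}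
    (hb : Summable fun k => ‖b k‖ * (∑ j, ‖z j‖) ^ k) :
    Summable fun α => ‖sumCompCoeff b α * ∏ j, z j ^ α j‖ :=
  summable_of_summable_sum_piAntidiag (fun _ => norm_nonneg _) <| by
    simpa only [norm_sumCompCoeff_mul_prod_pow, sum_piAntidiag_sumCompCoeff_mul_prod_pow]
      using hb

lemma hasSum_sumCompCoeff_mul_prod_pow {z : ι → 𝕜}
    (hb : Summable fun k => ‖b k‖ * (∑ j, ‖z j‖) ^ k) :
    HasSum (fun k => b k * (∑ j, z j) ^ k) (∑' α, sumCompCoeff b α * ∏ j, z j ^ α j) := by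
  simpa only [sum_piAntidiag_sumCompCoeff_mul_prod_pow] using
    (summable_norm_sumCompCoeff_mul_prod_pow hb).of_norm.hasSum.sum_piAntidiag

lemma norm_mul_pow_div_pow_le_sum_piAntidiag {r : ℝ} (hr : 0 ≤ r) (k : ℕ) :
    ‖b k‖ * (Fintype.card ι * r : ℝ) ^ k / k ^ k ≤
      ∑ α ∈ piAntidiag (univ : Finset ι) k,
        ‖sumCompCoeff b α‖ * r ^ (∑ j, α j) * hyperconeMonomialSup α := by
  calc ‖b k‖ * (Fintype.card ι * r : ℝ) ^ k / k ^ k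
      = ∑ α ∈ piAntidiag (univ : Finset ι) k,
          ‖b k‖ * Nat.multinomial univ α * r ^ k * ((k : ℝ) ^ k)⁻¹ := by
        simp only [← sum_mul, ← mul_sum, sum_piAntidiag_multinomial, mul_pow]
        ring
    _ ≤ _ := sum_le_sum fun α hα => by
        obtain rfl := (mem_piAntidiag.mp hα).1
        rw [norm_sumCompCoeff]
        gcongr
        exact inv_pow_le_hyperconeMonomialSup α

lemma ofReal_sum_range_norm_mul_pow_div_pow_le_tsum {r : ℝ} (hr : 0 ≤ r) (N : ℕ) :
    ENNReal.ofReal (∑ k ∈ range N, ‖b k‖ * (Fintype.card ι * r : ℝ) ^ k / k ^ k) ≤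
      ∑' α : ι → ℕ, ENNReal.ofReal (‖sumCompCoeff b α‖ * r ^ (∑ j, α j) * hyperconeMonomialSup α) :=
  calc _ ≤ ENNReal.ofReal (∑ k ∈ range N, ∑ α ∈ piAntidiag (univ : Finset ι) k,
          ‖sumCompCoeff b α‖ * r ^ (∑ j, α j) * hyperconeMonomialSup α) :=
        ENNReal.ofReal_le_ofReal <| sum_le_sum fun k _ =>
          norm_mul_pow_div_pow_le_sum_piAntidiag hr k
    _ ≤ _ := ofReal_sum_range_sum_piAntidiag_le_tsum (fun α => mul_nonneg (by positivity)
          ((by positivity : (0 : ℝ) ≤ _).trans (inv_pow_le_hyperconeMonomialSup α))) N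

end Normed

/-- Theorem 6: for the unit hypercone `D⁰ = {z : Σ|z_j| < 1}`, the Bohr-type
inequality fails for every `r ≥ 0.446663/n`, i.e. `B_n(D⁰) < 0.446663/n`. -/
theorem bohr_hypercone_upper (n : ℕ) (hn : 1 ≤ n) :
    ∀ r : ℝ, 0.446663 / n ≤ r →
      ∃ c : (Fin n → ℕ) → ℂ,
        (∀ z : Fin n → ℂ, (∑ j, ‖z j‖ < 1) →
          Summable (fun α : Fin n → ℕ => ‖c α * ∏ j, z j ^ α j‖)) ∧
        (∀ z : Fin n → ℂ, (∑ j, ‖z j‖ < 1) →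
          ‖∑' α : Fin n → ℕ, c α * ∏ j, z j ^ α j‖ < 1) ∧
        1 ≤ ∑' α : Fin n → ℕ, ENNReal.ofReal
          (‖c α‖ * r ^ (∑ j, α j) *
            ((∏ j, (α j : ℝ) ^ (α j)) / ((∑ j, α j : ℕ) : ℝ) ^ (∑ j, α j))) := by
  intro r hr
  have hnr : 0.446663 ≤ n * r := by rwa [div_le_iff₀' (by exact_mod_cast hn)] at hr
  have hr0 : 0 ≤ r := le_trans (by positivity) hr
  have ha : |(0.999999 : ℝ)| < 1 := by norm_num
  set b : ℕ → ℂ := fun k => (blaschkeCoeff 0.999999 k : ℂ)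
  have hnorm_b (k : ℕ) : ‖b k‖ = |blaschkeCoeff 0.999999 k| := by
    rw [Complex.norm_real, Real.norm_eq_abs]
  have hb (z : Fin n → ℂ) (hz : ∑ j, ‖z j‖ < 1) :
      Summable fun k => ‖b k‖ * (∑ j, ‖z j‖) ^ k :=
    (summable_geometric_of_lt_one (by positivity) hz).of_nonneg_of_le (fun k => by positivity)
      fun k => mul_le_of_le_one_left (by positivity)
        ((hnorm_b k).trans_le (abs_blaschkeCoeff_le_one ha.le k))
  refine ⟨sumCompCoeff b, fun z hz => summable_norm_sumCompCoeff_mul_prod_pow (hb z hz),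
    fun z hz => ?_, ?_⟩
  · have hw : ‖∑ j, z j‖ < 1 := (norm_sum_le _ _).trans_lt hz
    rw [(hasSum_sumCompCoeff_mul_prod_pow (hb z hz)).unique
      (hasSum_blaschkeCoeff_mul_pow ha.le hw)]
    exact norm_blaschke_lt_one ha hw
  · have hbohr := ofReal_sum_range_norm_mul_pow_div_pow_le_tsum (ι := Fin n) (b := b) hr0 7
    rw [Fintype.card_fin] at hbohr
    refine le_trans (ENNReal.one_le_ofReal.mpr ?_) hbohr
    simpa only [hnorm_b] using one_le_sum_range_abs_blaschkeCoeff_mul_pow_div_pow hnr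
end
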